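/- arXiv:2502.15320 — 2 statements merged into one kernel-verified Lean document; each statement's English description precedes it below -/
import Mathlib

section
/- Let $\varepsilon, \beta, \phi$ be reals with $0 < \varepsilon \leq \frac{1}{6}$, $0 \leq \beta \leq \frac{\varepsilon}{200}$, $\phi \geq 0$, and $\phi + \varepsilon \leq 1$. Define the real sequence $(h'_i)$ by $h'_0 := 1 - (\phi + \varepsilon)$ and $h'_{i+1} := (h'_i - \beta)^2$. Then there exists an integer $t$ with $0 \leq t \leq \frac{3}{2}\log_2\left(\frac{1}{\varepsilon}\right)$ such that $h'_t \leq \frac{1}{2} - \frac{21\varepsilon}{16}$; in particular, the least such index $t$ satisfies $t \leq \frac{3}{2}\log_2\left(\frac{1}{\varepsilon}\right)$. -/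
/-!
Below the threshold `T` one step `x ↦ (x - β)²` stays below `T`, and above it the step is at
most squaring, so `h'ᵢ ≤ max T ((1 - ε)^(2^i))`. For `t = ⌊(3/2) log₂(1/ε)⌋` we have
`2^(t+1) > ε^(-3/2)`, and `1 - ε ≤ exp (-(ε + ε²/4))` bounds `(1 - ε)^(2^t)` by
`exp (-(4 + ε) / (8 √ε))`, which is below `T` for `ε ≤ 1/6` (with little room to spare:
at `ε = 1/6` this needs `e > 2.707`).
-/

open Real

lemma sq_sub_le_max_sq {x β T b : ℝ} (hx : 0 ≤ x) (hβ0 : 0 ≤ β) (hβT : β ≤ T) (hT1 : T ≤ 1)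
    (hxb : x ≤ max T b) : (x - β) ^ 2 ≤ max T (b ^ 2) := by
  rcases le_or_gt x T with hxT | hTx
  · refine le_max_of_le_left ?_
    have habs : |x - β| ≤ T := abs_sub_le_iff.2 ⟨by linarith, by linarith⟩
    calc (x - β) ^ 2 = |x - β| ^ 2 := (sq_abs _).symm
      _ ≤ T ^ 2 := pow_le_pow_left₀ (abs_nonneg _) habs 2
      _ ≤ T := pow_le_of_le_one (by linarith) hT1 two_ne_zero
  · have hxb' : x ≤ b := (le_max_iff.1 hxb).resolve_left hTx.not_ge
    exact le_max_of_le_right (pow_le_pow_left₀ (by linarith) (by linarith) 2)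

lemma le_max_pow_two_pow_of_sq_sub {β T a : ℝ} {h : ℕ → ℝ} (hβ0 : 0 ≤ β) (hβT : β ≤ T)
    (hT1 : T ≤ 1) (h0 : 0 ≤ h 0) (h0a : h 0 ≤ a) (hrec : ∀ i, h (i + 1) = (h i - β) ^ 2) :
    ∀ j, h j ≤ max T (a ^ 2 ^ j)
  | 0 => by simpa using le_max_of_le_right h0a
  | j + 1 => by
    have hj : 0 ≤ h j := by
      cases j with
      | zero => exact h0
      | succ i => rw [hrec]; positivity
    rw [hrec, pow_succ 2 j, pow_mul]
    exact sq_sub_le_max_sq hj hβ0 hβT hT1 (le_max_pow_two_pow_of_sq_sub hβ0 hβT hT1 h0 h0a hrec j)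

lemma lt_two_pow_floor_logb_add_one {x : ℝ} (hx : 0 < x) : x < 2 ^ (⌊logb 2 x⌋₊ + 1) := by
  exact_mod_cast (logb_lt_iff_lt_rpow one_lt_two hx).1 (Nat.lt_floor_add_one (logb 2 x))

lemma one_sub_half_sq_le_exp_neg {y : ℝ} (hy : y ≤ 2) : (1 - y / 2) ^ 2 ≤ exp (-y) :=
  calc (1 - y / 2) ^ 2 ≤ exp (-(y / 2)) ^ 2 :=
        pow_le_pow_left₀ (by linarith) (by linarith [add_one_le_exp (-(y / 2))]) 2
    _ = exp (-y) := by rw [← exp_nat_mul]; ring_nf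

lemma one_sub_le_exp_neg_add_sq_div_four {ε : ℝ} (hε0 : 0 ≤ ε) (hε1 : ε ≤ 1) :
    1 - ε ≤ exp (-(ε + ε ^ 2 / 4)) := by
  refine le_trans ?_ (one_sub_half_sq_le_exp_neg (by nlinarith))
  have hexpand : (1 - (ε + ε ^ 2 / 4) / 2) ^ 2 = 1 - ε + ε ^ 3 / 8 + ε ^ 4 / 64 := by ring
  linarith [pow_nonneg hε0 3, pow_nonneg hε0 4]

lemma exp_one_mul_one_add_sq_div_two_le_exp {g : ℝ} (hg : 1 ≤ g) :
    exp 1 * ((1 + g ^ 2) / 2) ≤ exp g :=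
  calc exp 1 * ((1 + g ^ 2) / 2) = exp 1 * (1 + (g - 1) + (g - 1) ^ 2 / 2) := by ring
    _ ≤ exp 1 * exp (g - 1) := by gcongr; exact quadratic_le_exp_of_nonneg (by linarith)
    _ = exp g := by rw [← exp_add]; ring_nf

lemma exp_neg_le_of_six_mul_sq_le_one {s : ℝ} (hs : 0 < s) (hs6 : 6 * s ^ 2 ≤ 1) :
    exp (-((4 + s ^ 2) / (8 * s))) ≤ 1 / 2 - 21 * s ^ 2 / 16 := by
  set g := (4 + s ^ 2) / (8 * s) with hg
  have hg1 : 1 ≤ g := by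
    rw [hg, le_div_iff₀ (by positivity)]
    nlinarith [sq_nonneg (7 * s - 4)]
  have hq : (1 + g ^ 2) / 2 = (s ^ 4 + 72 * s ^ 2 + 16) / (128 * s ^ 2) := by
    rw [hg]; field_simp; ring
  have hpoly : 2048 * s ^ 2 ≤ 2.7182818283 * ((8 - 21 * s ^ 2) * (s ^ 4 + 72 * s ^ 2 + 16)) := by
    have h6 : (0 : ℝ) ≤ 1 - 6 * s ^ 2 := by linarith
    nlinarith [mul_nonneg (sq_nonneg s) h6, sq_nonneg (s ^ 2),
      mul_nonneg (mul_nonneg (sq_nonneg s) (sq_nonneg s)) h6]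
  have hT0 : 0 ≤ 1 / 2 - 21 * s ^ 2 / 16 := by linarith
  rw [exp_neg, inv_le_iff_one_le_mul₀ (exp_pos g)]
  calc 1 ≤ 2.7182818283 * ((8 - 21 * s ^ 2) * (s ^ 4 + 72 * s ^ 2 + 16)) / (2048 * s ^ 2) := by
        rw [le_div_iff₀ (by positivity)]; linarith
    _ = (1 / 2 - 21 * s ^ 2 / 16) * (2.7182818283 * ((1 + g ^ 2) / 2)) := by
        rw [hq]; field_simp; ring
    _ ≤ (1 / 2 - 21 * s ^ 2 / 16) * (exp 1 * ((1 + g ^ 2) / 2)) := by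
        gcongr; exact exp_one_gt_d9.le
    _ ≤ (1 / 2 - 21 * s ^ 2 / 16) * exp g := by
        gcongr; exact exp_one_mul_one_add_sq_div_two_le_exp hg1

lemma one_sub_sq_pow_le {s : ℝ} (hs : 0 < s) (hs6 : 6 * s ^ 2 ≤ 1) {n : ℕ}
    (hn : 1 < 2 * n * s ^ 3) : (1 - s ^ 2) ^ n ≤ 1 / 2 - 21 * s ^ 2 / 16 := by
  have hgn : (4 + s ^ 2) / (8 * s) ≤ n * (s ^ 2 + (s ^ 2) ^ 2 / 4) := by
    rw [div_le_iff₀ (by positivity)]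
    nlinarith [mul_le_mul_of_nonneg_right hn.le (by positivity : (0:ℝ) ≤ 4 + s ^ 2)]
  calc (1 - s ^ 2) ^ n ≤ exp (-(s ^ 2 + (s ^ 2) ^ 2 / 4)) ^ n :=
        pow_le_pow_left₀ (by linarith)
          (one_sub_le_exp_neg_add_sq_div_four (by positivity) (by linarith)) n
    _ = exp (-(n * (s ^ 2 + (s ^ 2) ^ 2 / 4))) := by rw [← exp_nat_mul]; ring_nf
    _ ≤ exp (-((4 + s ^ 2) / (8 * s))) := by gcongr
    _ ≤ 1 / 2 - 21 * s ^ 2 / 16 := exp_neg_le_of_six_mul_sq_le_one hs hs6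

/-- Termination bound for the recursion `h' 0 = 1 - (φ + ε)`, `h' (i+1) = (h' i - β)²`:
there is an index `t ≤ (3/2) log₂(1/ε)` with `h' t ≤ 1/2 - 21ε/16`. -/
theorem stmt_9 (ε β φ : ℝ) (hε0 : 0 < ε) (hε : ε ≤ 1 / 6) (hβ0 : 0 ≤ β) (hβ : β ≤ ε / 200)
    (hφ : 0 ≤ φ) (hφε : φ + ε ≤ 1)
    (h' : ℕ → ℝ) (h0 : h' 0 = 1 - (φ + ε)) (hrec : ∀ i, h' (i + 1) = (h' i - β) ^ 2) :
    ∃ t : ℕ, (t : ℝ) ≤ 3 / 2 * Real.logb 2 (1 / ε) ∧ h' t ≤ 1 / 2 - 21 * ε / 16 := by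
  obtain ⟨s, hs, rfl⟩ : ∃ s, 0 < s ∧ s ^ 2 = ε := ⟨√ε, sqrt_pos.2 hε0, sq_sqrt hε0.le⟩
  have hlog : 3 / 2 * logb 2 (1 / s ^ 2) = logb 2 (1 / s ^ 3) := by
    simp only [one_div, logb_inv, logb_pow]; push_cast; ring
  have hs3 : 1 ≤ 1 / s ^ 3 := by
    rw [le_div_iff₀ (by positivity), one_mul]
    exact pow_le_one₀ hs.le (by nlinarith)
  rw [hlog]
  refine ⟨⌊logb 2 (1 / s ^ 3)⌋₊, Nat.floor_le (logb_nonneg one_lt_two hs3), ?_⟩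
  have hiter := le_max_pow_two_pow_of_sq_sub (T := 1 / 2 - 21 * s ^ 2 / 16) (a := 1 - s ^ 2)
    hβ0 (by linarith) (by linarith) (by linarith) (by linarith) hrec ⌊logb 2 (1 / s ^ 3)⌋₊
  refine hiter.trans (max_le le_rfl (one_sub_sq_pow_le hs (by linarith) ?_))
  have hlt := lt_two_pow_floor_logb_add_one (x := 1 / s ^ 3) (by positivity)
  rw [pow_succ (2 : ℝ), div_lt_iff₀ (by positivity)] at hlt
  push_cast
  linarith
end

section
/- Let $\varepsilon, \beta, \phi$ be reals with $0 < \varepsilon \leq \frac{1}{6}$, $0 < \beta \leq \frac{\varepsilon^{2.5}}{16}$, $\phi \geq 0$, and $\phi + \varepsilon \leq 1$. Define the real sequences $h'_0 = h_0 := 1 - (\phi + \varepsilon)$, $h'_{i+1} := (h'_i - \beta)^2$, and $h_{i+1} := (h_i + \beta)^2$. Suppose $t \geq 1$ is the least index with $h'_t \leq T := \frac{1}{2} - \frac{21\varepsilon}{16}$ (assumed to exist). Then $h'_i \leq h_i$ for all $i \geq 0$, and moreover $h_{t-1} \leq h'_{t-1}\left(1 + \frac{3\varepsilon}{4}\right)$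 and $h_t \leq h'_t\left(1 + \frac{3\varepsilon}{4}\right)$. -/
/-!
Track the ratio `h i / h' i`. Since `h i + β ≤ exp D * (h' i + β)` and
`h' i + β ≤ (h' i - β) * exp (2β / (h' i - β))`, a bound `h i ≤ h' i * exp D` becomes
`h (i+1) ≤ h' (i+1) * exp (2 (D + 2β / L))` whenever `h' i - β ≥ L`. Before the last step
`h' i - β = √(h' (i+1)) > √T > 0.53`, and at the last step `h' (t-1) - β > T - β > 0.28`.
As `h'` is at most squared in each step, `h' i ≤ exp (-2^i ε)`, so `h' (t-1) > T ≥ 9/32` forces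
`2^(t-1) ε ≤ 1.48`; with `β ≤ 0.41 ε² / 16` the accumulated exponent is at most `2ε/3`, and
`exp (2ε/3) ≤ 1 + 3ε/4` for `ε ≤ 1/6`.
-/

open Real

lemma sq_sub_le_sq_add {a b β : ℝ} (ha : 0 ≤ a) (hab : a ≤ b) (hβ : 0 ≤ β) :
    (a - β) ^ 2 ≤ (b + β) ^ 2 :=
  sq_le_sq' (by linarith) (by linarith)

lemma sq_add_le_sq_sub_mul_exp {a b β D L : ℝ} (hb0 : 0 ≤ b) (hb : b ≤ a * exp D)
    (hD : 0 ≤ D) (hβ : 0 ≤ β) (hL : 0 < L) (hLa : L ≤ a - β) :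
    (b + β) ^ 2 ≤ (a - β) ^ 2 * exp (2 * (D + 2 * β / L)) := by
  have hgap : 0 < a - β := hL.trans_le hLa
  have hratio : a + β ≤ (a - β) * exp (2 * β / L) := calc
    a + β = (a - β) * (2 * β / (a - β) + 1) := by field_simp; ring
    _ ≤ (a - β) * (2 * β / L + 1) := by gcongr
    _ ≤ (a - β) * exp (2 * β / L) := by gcongr; exact add_one_le_exp _
  have hlin : b + β ≤ (a - β) * exp (D + 2 * β / L) := calc
    b + β ≤ (a + β) * exp D := by nlinarith [one_le_exp hD]
    _ ≤ (a - β) * exp (2 * β / L) * exp D := by gcongr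
    _ = (a - β) * exp (D + 2 * β / L) := by rw [exp_add]; ring
  calc (b + β) ^ 2 ≤ ((a - β) * exp (D + 2 * β / L)) ^ 2 := by gcongr
    _ = (a - β) ^ 2 * exp (2 * (D + 2 * β / L)) := by
      rw [mul_pow, ← exp_nat_mul]; norm_num

lemma two_pow_succ_sub_two_mul_nonneg {c : ℝ} (hc : 0 ≤ c) (i : ℕ) :
    0 ≤ (2 ^ (i + 1) - 2 : ℝ) * c := by
  have : (2 : ℝ) ≤ 2 ^ (i + 1) := le_self_pow₀ (by norm_num) (by omega)
  exact mul_nonneg (by linarith) hc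

lemma mul_quadratic_lt_one_of_lt_exp_neg {c x : ℝ} (hc : 0 ≤ c) (hx : 0 ≤ x)
    (h : c < exp (-x)) : c * (1 + x + x ^ 2 / 2) < 1 := calc
  c * (1 + x + x ^ 2 / 2) ≤ c * exp x := by gcongr; exact quadratic_le_exp_of_nonneg hx
  _ < exp (-x) * exp x := mul_lt_mul_of_pos_right h (exp_pos x)
  _ = 1 := by rw [← exp_add]; simp

lemma rpow_five_halves {x : ℝ} (hx : 0 ≤ x) : x ^ (2.5 : ℝ) = x ^ 2 * √x := by
  rw [show (2.5 : ℝ) = (2 : ℕ) + 1 / 2 by norm_num, rpow_add' hx (by norm_num),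
    rpow_natCast, sqrt_eq_rpow]

section SquaringRecursions

variable {β : ℝ} {h' h : ℕ → ℝ}

lemma nonneg_of_sq_rec (h'rec : ∀ i, h' (i + 1) = (h' i - β) ^ 2) (h'0 : 0 ≤ h' 0) :
    ∀ i, 0 ≤ h' i
  | 0 => h'0
  | i + 1 => h'rec i ▸ sq_nonneg _

lemma le_of_sq_rec (h'rec : ∀ i, h' (i + 1) = (h' i - β) ^ 2)
    (hrec : ∀ i, h (i + 1) = (h i + β) ^ 2) (hβ : 0 ≤ β) (h'0 : 0 ≤ h' 0)
    (h0 : h' 0 ≤ h 0) : ∀ i, h' i ≤ h i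
  | 0 => h0
  | i + 1 => by
    rw [h'rec, hrec]
    exact sq_sub_le_sq_add (nonneg_of_sq_rec h'rec h'0 i)
      (le_of_sq_rec h'rec hrec hβ h'0 h0 i) hβ

lemma le_pow_of_sq_rec (h'rec : ∀ i, h' (i + 1) = (h' i - β) ^ 2) (hβ : 0 ≤ β) :
    ∀ i, (∀ j < i, β ≤ h' j) → h' i ≤ h' 0 ^ 2 ^ i
  | 0, _ => by simp
  | i + 1, hlarge => by
    have hi := le_pow_of_sq_rec h'rec hβ i fun j hj => hlarge j (by omega)
    have hβi := hlarge i (by omega)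
    calc h' (i + 1) = (h' i - β) ^ 2 := h'rec i
      _ ≤ (h' 0 ^ 2 ^ i) ^ 2 := by gcongr; linarith
      _ = h' 0 ^ 2 ^ (i + 1) := by rw [← pow_mul, pow_succ]

lemma le_exp_neg_of_sq_rec (h'rec : ∀ i, h' (i + 1) = (h' i - β) ^ 2) (hβ : 0 ≤ β)
    {ε : ℝ} (h'0 : h' 0 ≤ 1 - ε) (h'0_nonneg : 0 ≤ h' 0) (i : ℕ) (hlarge : ∀ j < i, β ≤ h' j) :
    h' i ≤ exp (-(2 ^ i * ε)) := calc
  h' i ≤ h' 0 ^ 2 ^ i := le_pow_of_sq_rec h'rec hβ i hlarge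
  _ ≤ exp (-ε) ^ 2 ^ i := by gcongr; linarith [add_one_le_exp (-ε)]
  _ = exp (-(2 ^ i * ε)) := by rw [← exp_nat_mul]; push_cast; ring_nf

variable (h'rec : ∀ i, h' (i + 1) = (h' i - β) ^ 2) (hrec : ∀ i, h (i + 1) = (h i + β) ^ 2)
  (hβ : 0 ≤ β) (hh : ∀ i, 0 ≤ h i) (h0 : h 0 ≤ h' 0) {L : ℝ} (hL : 0 < L)
include h'rec hrec hβ hh h0 hL

lemma le_mul_exp_of_sq_rec :
    ∀ i, (∀ j < i, L ≤ h' j - β) → h i ≤ h' i * exp ((2 ^ (i + 1) - 2) * (2 * β / L))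
  | 0, _ => by simpa using h0
  | i + 1, hgap => by
    have hi := le_mul_exp_of_sq_rec i fun j hj => hgap j (by omega)
    rw [h'rec, hrec]
    convert sq_add_le_sq_sub_mul_exp (hh i) hi
      (two_pow_succ_sub_two_mul_nonneg (by positivity) i) hβ hL (hgap i (by omega)) using 3
    ring

lemma le_mul_exp_of_sq_rec_succ {k : ℕ} (hgap : ∀ j < k, L ≤ h' j - β) {L' : ℝ}
    (hL' : 0 < L') (hgap' : L' ≤ h' k - β) :
    h (k + 1) ≤ h' (k + 1) * exp (2 * ((2 ^ (k + 1) - 2) * (2 * β / L) + 2 * β / L')) := by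
  rw [h'rec, hrec]
  exact sq_add_le_sq_sub_mul_exp (hh k) (le_mul_exp_of_sq_rec h'rec hrec hβ hh h0 hL k hgap)
    (two_pow_succ_sub_two_mul_nonneg (by positivity) k) hβ hL' hgap'

end SquaringRecursions

lemma tracking_exponent_le {ε β : ℝ} {k : ℕ} (hε0 : 0 ≤ ε) (hβ0 : 0 ≤ β)
    (hβ : β ≤ 41 / 1600 * ε ^ 2) (hk : 2 ^ k * ε ≤ 37 / 25) :
    2 * ((2 ^ (k + 1) - 2) * (2 * β / (53 / 100)) + 2 * β / (7 / 25)) ≤ 2 * ε / 3 := by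
  have hkβ : 2 ^ k * β ≤ 37 / 25 * (41 / 1600 * ε) := calc
    2 ^ k * β ≤ 2 ^ k * ε * (41 / 1600 * ε) := by nlinarith [pow_pos (two_pos : (0 : ℝ) < 2) k]
    _ ≤ 37 / 25 * (41 / 1600 * ε) := by gcongr
  rw [pow_succ]
  nlinarith

theorem stmt_10_general (ε β φ : ℝ) (hε0 : 0 < ε) (hε : ε ≤ 1 / 6) (hβ0 : 0 < β)
    (hβ : β ≤ ε ^ (2.5 : ℝ) / 16) (hφ : 0 ≤ φ) (hφε : φ + ε ≤ 1)
    (h' h : ℕ → ℝ) (h'0 : h' 0 = 1 - (φ + ε)) (h0 : h 0 = 1 - (φ + ε))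
    (h'rec : ∀ i, h' (i + 1) = (h' i - β) ^ 2) (hrec : ∀ i, h (i + 1) = (h i + β) ^ 2)
    (t : ℕ) (ht1 : 1 ≤ t)
    (htleast : ∀ s, s < t → ¬ (h' s ≤ 1 / 2 - 21 * ε / 16)) :
    (∀ i, h' i ≤ h i) ∧ h (t - 1) ≤ h' (t - 1) * (1 + 3 * ε / 4) ∧
      h t ≤ h' t * (1 + 3 * ε / 4) := by
  obtain ⟨k, rfl⟩ : ∃ k, t = k + 1 := ⟨t - 1, by omega⟩
  rw [Nat.add_sub_cancel]
  have hβε : β ≤ 41 / 1600 * ε ^ 2 := by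
    have : √ε ≤ 41 / 100 := by rw [sqrt_le_left (by norm_num)]; linarith
    rw [rpow_five_halves hε0.le] at hβ
    nlinarith [sq_nonneg ε]
  have hβsmall : β ≤ 1 / 1000 := by nlinarith
  have hlarge : ∀ j ≤ k, 9 / 32 < h' j := fun j hj => by
    linarith [not_le.mp (htleast j (by omega))]
  have hnn := nonneg_of_sq_rec h'rec (by linarith : 0 ≤ h' 0)
  have hle := le_of_sq_rec h'rec hrec hβ0.le (hnn 0) (by rw [h'0, h0])
  have hβlarge : ∀ j ≤ k, β ≤ h' j := fun j hj => by linarith [hlarge j hj]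
  -- `(h' j - β) ^ 2 = h' (j + 1) > 9/32 > (53/100) ^ 2`
  have hgap : ∀ j < k, 53 / 100 ≤ h' j - β := fun j hj => by
    refine (lt_of_pow_lt_pow_left₀ 2 (by linarith [hβlarge j hj.le]) ?_).le
    linarith [h'rec j ▸ hlarge (j + 1) hj]
  have hdoubling : 9 / 32 * (1 + 2 ^ k * ε + (2 ^ k * ε) ^ 2 / 2) < 1 :=
    mul_quadratic_lt_one_of_lt_exp_neg (by norm_num) (by positivity) <|
      (hlarge k le_rfl).trans_le <| le_exp_neg_of_sq_rec h'rec hβ0.le (by linarith) (hnn 0) k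
        fun j hj => hβlarge j hj.le
  have hexp : ∀ E, 0 ≤ E → E ≤ 2 * ε / 3 → exp E ≤ 1 + 3 * ε / 4 := fun E hE0 hE => calc
    exp E ≤ 1 / (1 - E) := exp_bound_div_one_sub_of_interval hE0 (by linarith)
    _ ≤ 1 + 3 * ε / 4 := by rw [div_le_iff₀ (by linarith)]; nlinarith
  have hh : ∀ i, 0 ≤ h i := fun i => (hnn i).trans (hle i)
  have hprev := le_mul_exp_of_sq_rec h'rec hrec hβ0.le hh (by rw [h'0, h0]) (by norm_num) k hgap
  have hlast := le_mul_exp_of_sq_rec_succ h'rec hrec hβ0.le hh (by rw [h'0, h0]) (by norm_num) hgap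
    (by norm_num : (0 : ℝ) < 7 / 25) (by linarith [hlarge k le_rfl])
  set D := (2 ^ (k + 1) - 2 : ℝ) * (2 * β / (53 / 100))
  have hD0 : 0 ≤ D := two_pow_succ_sub_two_mul_nonneg (by positivity) k
  have hDε : 2 * (D + 2 * β / (7 / 25)) ≤ 2 * ε / 3 :=
    tracking_exponent_le hε0.le hβ0.le hβε (by nlinarith)
  refine ⟨hle, hprev.trans ?_, hlast.trans ?_⟩
  · gcongr; exacts [hnn k, hexp D hD0 (by linarith)]
  · gcongr; exacts [hnn _, hexp _ (by positivity) hDε]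

/-- Closeness of the lower- and upper-tracking recursions `h'` and `h` of the
2-tournament quantile-shifting algorithm: `h' i ≤ h i` for all `i`, and at the least
index `t` where `h' t` drops below the threshold `T = 1/2 - 21ε/16`, one has
`h (t-1) ≤ h' (t-1) (1 + 3ε/4)` and `h t ≤ h' t (1 + 3ε/4)`. -/
theorem stmt_10 (ε β φ : ℝ) (hε0 : 0 < ε) (hε : ε ≤ 1 / 6) (hβ0 : 0 < β)
    (hβ : β ≤ ε ^ (2.5 : ℝ) / 16) (hφ : 0 ≤ φ) (hφε : φ + ε ≤ 1)
    (h' h : ℕ → ℝ) (h'0 : h' 0 = 1 - (φ + ε)) (h0 : h 0 = 1 - (φ + ε))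
    (h'rec : ∀ i, h' (i + 1) = (h' i - β) ^ 2) (hrec : ∀ i, h (i + 1) = (h i + β) ^ 2)
    (t : ℕ) (ht1 : 1 ≤ t)
    (htle : h' t ≤ 1 / 2 - 21 * ε / 16)
    (htleast : ∀ s, s < t → ¬ (h' s ≤ 1 / 2 - 21 * ε / 16)) :
    (∀ i, h' i ≤ h i) ∧ h (t - 1) ≤ h' (t - 1) * (1 + 3 * ε / 4) ∧
      h t ≤ h' t * (1 + 3 * ε / 4) :=
  stmt_10_general ε β φ hε0 hε hβ0 hβ hφ hφε h' h h'0 h0 h'rec hrec t ht1 htleast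
end
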